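/- Let (ε_n)_{n≥3} and (ε'_n)_{n≥3} be two sequences with values in {−1, 1} such that for some index k one has ε_k = −1 and ε'_k = 1, while ε_n = ε'_n for every n ≠ k. Define integer sequences by F̃₁ = F̃₂ = F̃'₁ = F̃'₂ = 1, F̃_{n+2} = |F̃_{n+1} + ε_{n+2}·F̃_n| and F̃'_{n+2} = |F̃'_{n+1} + ε'_{n+2}·F̃'_n| for n ≥ 1. Then F̃_n ≤ F̃'_n for every n ≥ 1. -/

import Mathlib

/-!
Write `L` for the left step `(a, b) ↦ (b, |b - a|)` and `R` for the right step
`(a, b) ↦ (b, a + b)` on pairs of consecutive labels. On nonnegative pairs `L ∘ L ∘ R = id`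
and `L³ ≤ id` componentwise. Hence the relation "every `L`-iterate of `p` is below the
corresponding `L`-iterate of `q`" is preserved by `L`, by `R`, and by replacing `L` with `R`
on the larger side, so it propagates along the two sign sequences.
-/

/-- The (deterministic) non-linear random Fibonacci sequence driven by a sequence of signs:
`F̃ 1 = F̃ 2 = 1` and `F̃ (n+2) = |F̃ (n+1) + ε (n+2) * F̃ n|` for `n ≥ 1`. -/
def ntFib (ε : ℕ → ℤ) : ℕ → ℤ
  | 0 => 1
  | 1 => 1
  | 2 => 1
  | n + 3 => |ntFib ε (n + 2) + ε (n + 3) * ntFib ε (n + 1)|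

def fibStep (s : ℤ) (p : ℤ × ℤ) : ℤ × ℤ := (p.2, |p.2 + s * p.1|)

local notation "L" => fibStep (-1)

lemma fibStep_neg_one_mk (a b : ℤ) : L (a, b) = (b, |b - a|) := by
  simp [fibStep, sub_eq_add_neg]

lemma fibStep_one_mk {a b : ℤ} (ha : 0 ≤ a) (hb : 0 ≤ b) : fibStep 1 (a, b) = (b, a + b) := by
  simp [fibStep, add_comm, add_nonneg ha hb]

lemma fibStep_nonneg (s : ℤ) {p : ℤ × ℤ} (hp : 0 ≤ p.2) : 0 ≤ fibStep s p :=
  Prod.mk_le_mk.2 ⟨hp, abs_nonneg _⟩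

lemma iterate_fibStep_nonneg (s : ℤ) {p : ℤ × ℤ} (hp : 0 ≤ p) (j : ℕ) :
    0 ≤ (fibStep s)^[j] p := by
  induction j with
  | zero => exact hp
  | succ j ih => exact Function.iterate_succ_apply' (fibStep s) j p ▸ fibStep_nonneg s ih.2

lemma iterate_fibStep_neg_one_fibStep_one {p : ℤ × ℤ} (hp : 0 ≤ p) (j : ℕ) :
    L^[j + 2] (fibStep 1 p) = L^[j] p := by
  obtain ⟨a, b⟩ := p
  obtain ⟨ha, hb⟩ := Prod.mk_le_mk.1 hp
  rw [Function.iterate_add_apply]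
  congr 1
  simp [fibStep_one_mk ha hb, fibStep_neg_one_mk, abs_of_nonneg ha, hb]

lemma fibStep_neg_one_iterate_three_le {p : ℤ × ℤ} (hp : 0 ≤ p) : L^[3] p ≤ p := by
  obtain ⟨a, b⟩ := p
  obtain ⟨ha, hb⟩ := Prod.mk_le_mk.1 hp
  simp only [Function.iterate_succ, Function.iterate_zero, Function.comp_apply, id,
    fibStep_neg_one_mk, Prod.mk_le_mk]
  constructor <;> cases abs_cases (b - a) <;> cases abs_cases (|b - a| - b) <;>
    cases abs_cases (|(|b - a|) - b| - |b - a|) <;> linarith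

def LeftDominated (p q : ℤ × ℤ) : Prop := ∀ j, L^[j] p ≤ L^[j] q

namespace LeftDominated

lemma refl (p : ℤ × ℤ) : LeftDominated p p := fun _ => le_rfl

lemma trans {p q r : ℤ × ℤ} (hpq : LeftDominated p q) (hqr : LeftDominated q r) :
    LeftDominated p r := fun j => (hpq j).trans (hqr j)

lemma le {p q : ℤ × ℤ} (h : LeftDominated p q) : p ≤ q := h 0

lemma fibStep_neg_one {p q : ℤ × ℤ} (h : LeftDominated p q) : LeftDominated (L p) (L q) :=
  fun j => by simpa only [Function.iterate_succ_apply] using h (j + 1)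

lemma fibStep_one {p q : ℤ × ℤ} (hp : 0 ≤ p) (h : LeftDominated p q) :
    LeftDominated (fibStep 1 p) (fibStep 1 q) := by
  have hq : 0 ≤ q := hp.trans h.le
  obtain ⟨a, b⟩ := p
  obtain ⟨c, d⟩ := q
  obtain ⟨ha, hb⟩ := Prod.mk_le_mk.1 hp
  obtain ⟨hc, hd⟩ := Prod.mk_le_mk.1 hq
  obtain ⟨hac, hbd⟩ := Prod.mk_le_mk.1 h.le
  rintro (_ | _ | j)
  · simpa [fibStep_one_mk ha hb, fibStep_one_mk hc hd] using ⟨hbd, add_le_add hac hbd⟩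
  · simpa [fibStep_one_mk ha hb, fibStep_one_mk hc hd, fibStep_neg_one_mk, abs_of_nonneg ha,
      abs_of_nonneg hc] using ⟨add_le_add hac hbd, hac⟩
  · rw [iterate_fibStep_neg_one_fibStep_one hp, iterate_fibStep_neg_one_fibStep_one hq]
    exact h j

lemma fibStep_neg_one_fibStep_one {p : ℤ × ℤ} (hp : 0 ≤ p) :
    LeftDominated (L p) (fibStep 1 p) := by
  obtain ⟨a, b⟩ := p
  obtain ⟨ha, hb⟩ := Prod.mk_le_mk.1 hp
  rintro (_ | _ | j)
  · simp only [Function.iterate_zero_apply, fibStep_neg_one_mk, fibStep_one_mk ha hb,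
      Prod.mk_le_mk, le_rfl, true_and]
    cases abs_cases (b - a) <;> linarith
  · simp only [zero_add, Function.iterate_one, fibStep_neg_one_mk, fibStep_one_mk ha hb,
      add_sub_cancel_right, abs_of_nonneg ha, Prod.mk_le_mk]
    constructor <;> cases abs_cases (b - a) <;> cases abs_cases (|b - a| - b) <;> linarith
  · calc L^[j + 2] (L (a, b)) = L^[3] (L^[j] (a, b)) := by
          rw [← Function.iterate_succ_apply, ← Function.iterate_add_apply, add_comm 3 j]
      _ ≤ L^[j] (a, b) := fibStep_neg_one_iterate_three_le (iterate_fibStep_nonneg _ hp j)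
      _ = L^[j + 2] (fibStep 1 (a, b)) := (iterate_fibStep_neg_one_fibStep_one hp j).symm

lemma fibStep {p q : ℤ × ℤ} {s s' : ℤ} (hs : s = 1 ∨ s = -1) (hs' : s' = 1 ∨ s' = -1)
    (hss' : s ≤ s') (hp : 0 ≤ p) (h : LeftDominated p q) :
    LeftDominated (fibStep s p) (fibStep s' q) := by
  rcases hs with rfl | rfl <;> rcases hs' with rfl | rfl
  · exact h.fibStep_one hp
  · norm_num at hss'
  · exact h.fibStep_neg_one.trans (fibStep_neg_one_fibStep_one (hp.trans h.le))
  · exact h.fibStep_neg_one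

end LeftDominated

def ntFibPair (ε : ℕ → ℤ) (n : ℕ) : ℤ × ℤ := (ntFib ε (n + 1), ntFib ε (n + 2))

lemma ntFibPair_succ (ε : ℕ → ℤ) (n : ℕ) :
    ntFibPair ε (n + 1) = fibStep (ε (n + 3)) (ntFibPair ε n) :=
  rfl

lemma ntFib_nonneg (ε : ℕ → ℤ) : ∀ n, 0 ≤ ntFib ε n
  | 0 | 1 | 2 => zero_le_one
  | _ + 3 => abs_nonneg _

lemma ntFibPair_nonneg (ε : ℕ → ℤ) (n : ℕ) : 0 ≤ ntFibPair ε n :=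
  Prod.mk_le_mk.2 ⟨ntFib_nonneg ε _, ntFib_nonneg ε _⟩

theorem ntFib_mono {ε ε' : ℕ → ℤ} (hε : ∀ n, ε n = 1 ∨ ε n = -1)
    (hε' : ∀ n, ε' n = 1 ∨ ε' n = -1) (h : ε ≤ ε') : ntFib ε ≤ ntFib ε' := by
  have hdom : ∀ n, LeftDominated (ntFibPair ε n) (ntFibPair ε' n) := by
    intro n
    induction n with
    | zero => exact LeftDominated.refl _
    | succ n ih =>
      rw [ntFibPair_succ, ntFibPair_succ]
      exact ih.fibStep (hε _) (hε' _) (h _) (ntFibPair_nonneg ε n)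
  rintro (_ | n)
  · exact le_rfl
  · exact (Prod.mk_le_mk.1 (hdom n).le).1

/-- Turning a single `-1` sign into `+1` (i.e. a left step into a right step) can only increase
every label of the non-linear random Fibonacci sequence. -/
theorem ntFib_mono_of_sign_flip (ε ε' : ℕ → ℤ)
    (hval : ∀ n, ε n = 1 ∨ ε n = -1) (hval' : ∀ n, ε' n = 1 ∨ ε' n = -1)
    (k : ℕ) (hk : ε k = -1) (hk' : ε' k = 1)
    (hagree : ∀ n, n ≠ k → ε n = ε' n) :
    ∀ n, 1 ≤ n → ntFib ε n ≤ ntFib ε' n := by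
  have hle : ε ≤ ε' := fun n => by
    rcases eq_or_ne n k with rfl | hn
    · rw [hk, hk']; norm_num
    · exact (hagree n hn).le
  exact fun n _ => ntFib_mono hval hval' hle n
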